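/- arXiv:0908.2603 — 3 statements merged into one kernel-verified Lean document; each statement's English description precedes it below -/
import Mathlib

section
/- Fix ξ ∈ G with Δ(ξ) > 1 and p ∈ [1,∞). Then for every u ∈ D^p(G) there exists u_∞ ∈ D^p(G) such that u − u_∞ ∈ L^p(G,μ) and ρ(ξ)u_∞ = u_∞ μ-almost everywhere. (In other words, the sequence (ρ(ξ^n)u − u)_{n≥0} converges in L^p(G,μ) to some v, and u_∞ = u + v has the stated properties.) -/
/-!
Right translation by `g` scales `μ` by `c g = Δ(g⁻¹)`, so `ρ(g)` acts on `L^p` with norm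
`c(g)^(1/p)`, and `c ξ < 1`. If `F g = u - ρ(g)u`, then `F (g * h) = F g + ρ(g) (F h)`, hence
`F (g ξ^(n+1)) - F (g ξ^n) = ρ(g ξ^n) (F ξ)` has norm `c(g)^(1/p) c(ξ)^(n/p) ‖F ξ‖`. So
`F (g ξ^n)` converges, locally uniformly in `g`, to a continuous `W g`. With `w = W 1` one gets
`W g = F g + ρ(g) w` and `W ξ = w`, so `v = u - w` is a Dirichlet function whose cocycle
`W g - w` vanishes at `ξ`.
-/

open MeasureTheory
open scoped ENNReal

/-- `f` belongs to the `p`-Dirichlet space `D^p(G)`: `f` is measurable, and there is a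
continuous map `F : G → L^p(G,μ)` with `F g` a.e. equal to `f - ρ(g)f` for all `g`,
where `(ρ(g)f)(h) = f(hg)`. -/
def MemDirichlet {G : Type*} [Group G] [TopologicalSpace G] [MeasurableSpace G]
    (μ : Measure G) (p : ℝ≥0∞) [Fact (1 ≤ p)] (f : G → ℝ) : Prop :=
  AEStronglyMeasurable f μ ∧
    ∃ F : G → Lp ℝ p μ, Continuous F ∧
      ∀ g : G, ⇑(F g) =ᵐ[μ] fun h => f h - f (h * g)

open Filter
open scoped Topology Pointwise

theorem exists_continuous_tendsto_of_dist_le_geometric {X E : Type*} [TopologicalSpace X]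
    [PseudoMetricSpace E] [CompleteSpace E] {f : ℕ → X → E} {r : ℝ} (hr₀ : 0 ≤ r) (hr : r < 1)
    (hf : ∀ n, Continuous (f n))
    (hdist : ∀ x₀, ∃ C, ∀ᶠ x in 𝓝 x₀, ∀ n, dist (f n x) (f (n + 1) x) ≤ C * r ^ n) :
    ∃ f' : X → E, Continuous f' ∧ ∀ x, Tendsto (fun n => f n x) atTop (𝓝 (f' x)) := by
  have hcauchy (x : X) : CauchySeq fun n => f n x := by
    obtain ⟨C, hC⟩ := hdist x
    exact cauchySeq_of_le_geometric r C hr hC.self_of_nhds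
  choose f' hf' using fun x => cauchySeq_tendsto_of_complete (hcauchy x)
  refine ⟨f', TendstoLocallyUniformly.continuous ?_ (Frequently.of_forall (f := atTop) hf), hf'⟩
  rw [Metric.tendstoLocallyUniformly_iff]
  intro ε hε x₀
  obtain ⟨C, hC⟩ := hdist x₀
  have hlim : Tendsto (fun n => C * r ^ n / (1 - r)) atTop (𝓝 0) := by
    simpa using ((tendsto_pow_atTop_nhds_zero_of_lt_one hr₀ hr).const_mul C).div_const (1 - r)
  refine ⟨_, hC, (hlim.eventually (gt_mem_nhds hε)).mono fun n hn y hy => ?_⟩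
  rw [dist_comm]
  exact (dist_le_of_le_geometric_of_tendsto r C hr hy (hf' y) n).trans_lt hn

section CompOfMapEqSmul

variable {α β E : Type*} [MeasurableSpace α] [MeasurableSpace β] [NormedAddCommGroup E]
  {μ : Measure α} {ν : Measure β} {φ : α → β} {c p : ℝ≥0∞}

theorem quasiMeasurePreserving_of_map_eq_smul (hφ : Measurable φ) (hmap : μ.map φ = c • ν) :
    Measure.QuasiMeasurePreserving φ μ ν :=
  ⟨hφ, hmap ▸ Measure.smul_absolutelyContinuous⟩

theorem eLpNorm_comp_of_map_eq_smul (hφ : Measurable φ) (hmap : μ.map φ = c • ν) (hp : p ≠ ∞)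
    {f : β → E} (hf : AEStronglyMeasurable f ν) :
    eLpNorm (f ∘ φ) p μ = c ^ (1 / p).toReal * eLpNorm f p ν := by
  rw [← eLpNorm_map_measure (hmap ▸ hf.smul_measure c) hφ.aemeasurable, hmap,
    eLpNorm_smul_measure_of_ne_top hp, smul_eq_mul]

namespace Lp

def compOfMapEqSmul (hφ : Measurable φ) (hmap : μ.map φ = c • ν) (hc : c ≠ ∞) (hp : p ≠ ∞) :
    Lp E p ν →+ Lp E p μ where
  toFun g := ⟨g.1.compQuasiMeasurePreserving φ (quasiMeasurePreserving_of_map_eq_smul hφ hmap), by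
    rw [Lp.mem_Lp_iff_eLpNorm_lt_top,
      eLpNorm_congr_ae (AEEqFun.coeFn_compQuasiMeasurePreserving _ _),
      eLpNorm_comp_of_map_eq_smul hφ hmap hp g.1.aestronglyMeasurable]
    exact ENNReal.mul_lt_top (ENNReal.rpow_lt_top_of_nonneg ENNReal.toReal_nonneg hc)
      (Lp.eLpNorm_lt_top g)⟩
  map_zero' := rfl
  map_add' := by rintro ⟨⟨_⟩, _⟩ ⟨⟨_⟩, _⟩; rfl

variable (hφ : Measurable φ) (hmap : μ.map φ = c • ν) (hc : c ≠ ∞) (hp : p ≠ ∞)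

theorem coeFn_compOfMapEqSmul (g : Lp E p ν) :
    compOfMapEqSmul hφ hmap hc hp g =ᵐ[μ] g ∘ φ :=
  AEEqFun.coeFn_compQuasiMeasurePreserving _ (quasiMeasurePreserving_of_map_eq_smul hφ hmap)

theorem norm_compOfMapEqSmul (g : Lp E p ν) :
    ‖compOfMapEqSmul hφ hmap hc hp g‖ = c.toReal ^ (1 / p).toReal * ‖g‖ := by
  rw [Lp.norm_def, eLpNorm_congr_ae (coeFn_compOfMapEqSmul hφ hmap hc hp g),
    eLpNorm_comp_of_map_eq_smul hφ hmap hp (Lp.aestronglyMeasurable g), ENNReal.toReal_mul,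
    ENNReal.toReal_rpow, Lp.norm_def]

theorem continuous_compOfMapEqSmul [Fact (1 ≤ p)] :
    Continuous (compOfMapEqSmul (E := E) hφ hmap hc hp) :=
  AddMonoidHomClass.continuous_of_bound _ _ fun g => (norm_compOfMapEqSmul hφ hmap hc hp g).le

end Lp

end CompOfMapEqSmul

theorem MeasureTheory.Measure.smul_left_injective {X : Type*} [TopologicalSpace X]
    [WeaklyLocallyCompactSpace X] [Nonempty X] [MeasurableSpace X] {μ : Measure X}
    [μ.IsOpenPosMeasure] [IsFiniteMeasureOnCompacts μ] :
    Function.Injective fun a : ℝ≥0∞ => a • μ := by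
  intro a b hab
  obtain ⟨K, hK, hKn⟩ := exists_compact_mem_nhds (Classical.arbitrary X)
  have := congrArg (fun ν : Measure X => ν K) hab
  simp only [Measure.smul_apply, smul_eq_mul] at this
  exact (ENNReal.mul_left_inj (μ.measure_pos_of_mem_nhds hKn).ne' hK.measure_lt_top.ne).mp this

theorem map_mul_right_eq_ofReal_smul {G : Type*} [Group G] [MeasurableSpace G] [MeasurableMul G]
    {μ : Measure G} {Δ : G → ℝ}
    (hΔ : ∀ (g : G) (E : Set G), MeasurableSet E →
      μ ((fun x => x * g) '' E) = ENNReal.ofReal (Δ g) * μ E) (g : G) :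
    μ.map (· * g) = ENNReal.ofReal (Δ g⁻¹) • μ := by
  ext E hE
  rw [Measure.map_apply (measurable_mul_const g) hE, Measure.smul_apply, smul_eq_mul,
    ← hΔ g⁻¹ E hE, Set.image_mul_right, inv_inv]

section RightTranslation

variable {G : Type*} [Group G] [TopologicalSpace G] [IsTopologicalGroup G]
  [WeaklyLocallyCompactSpace G] [MeasurableSpace G] [BorelSpace G] {μ : Measure G}
  [μ.IsOpenPosMeasure] [IsFiniteMeasureOnCompacts μ] {c : G → ℝ≥0∞}

theorem exists_le_of_map_mul_right_eq_smul (hc : ∀ g, μ.map (· * g) = c g • μ) {L : Set G}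
    (hL : IsCompact L) : ∃ M ≠ ∞, ∀ g ∈ L, c g ≤ M := by
  obtain ⟨K, hK, hKn⟩ := exists_compact_mem_nhds (1 : G)
  have hK0 : μ K ≠ 0 := (μ.measure_pos_of_mem_nhds hKn).ne'
  refine ⟨μ (K * L⁻¹) / μ K, ENNReal.div_ne_top (hK.mul hL.inv).measure_lt_top.ne hK0,
    fun g hg => ?_⟩
  rw [ENNReal.le_div_iff_mul_le (.inl hK0) (.inl hK.measure_lt_top.ne), ← smul_eq_mul,
    ← Measure.smul_apply, ← hc g, ← MeasurableEquiv.coe_mulRight, MeasurableEquiv.map_apply]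
  refine measure_mono fun x hx => ?_
  simpa using Set.mul_mem_mul (show x * g ∈ K from hx) (Set.inv_mem_inv.mpr hg)

theorem map_mul_of_map_mul_right_eq_smul (hc : ∀ g, μ.map (· * g) = c g • μ) (g h : G) :
    c (g * h) = c g * c h := by
  refine Measure.smul_left_injective (μ := μ) ?_
  change c (g * h) • μ = (c g * c h) • μ
  rw [← hc]
  calc μ.map (· * (g * h)) = (μ.map (· * g)).map (· * h) := by
        rw [Measure.map_map (measurable_mul_const h) (measurable_mul_const g)]
        simp only [Function.comp_def, mul_assoc]
    _ = (c g * c h) • μ := by rw [hc, Measure.map_smul, hc, smul_smul]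

theorem ne_top_of_map_mul_right_eq_smul (hc : ∀ g, μ.map (· * g) = c g • μ) (g : G) :
    c g ≠ ∞ := by
  obtain ⟨M, hM, hle⟩ := exists_le_of_map_mul_right_eq_smul hc isCompact_singleton
  exact ne_top_of_le_ne_top hM (hle g rfl)

theorem lt_one_of_map_mul_right_eq_smul (hc : ∀ g, μ.map (· * g) = c g • μ) {g : G}
    (hg : 1 < c g⁻¹) : c g < 1 := by
  have hone : c 1 = 1 :=
    Measure.smul_left_injective (μ := μ) (by simp only [← hc, one_smul, mul_one, Measure.map_id'])
  have hinv : c g * c g⁻¹ = 1 := by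
    rw [← map_mul_of_map_mul_right_eq_smul hc, mul_inv_cancel, hone]
  rw [ENNReal.eq_inv_of_mul_eq_one_left hinv]
  exact ENNReal.inv_lt_one.mpr hg

end RightTranslation

section Dirichlet

variable {G : Type*} [Group G] [TopologicalSpace G] [IsTopologicalGroup G]
  [WeaklyLocallyCompactSpace G] [MeasurableSpace G] [BorelSpace G] {μ : Measure G}
  [μ.IsOpenPosMeasure] [IsFiniteMeasureOnCompacts μ] {c : G → ℝ≥0∞} {p : ℝ≥0∞}
  {u : G → ℝ} {F : G → Lp ℝ p μ}

noncomputable def rightTranslateLp (hc : ∀ g, μ.map (· * g) = c g • μ) (hp : p ≠ ∞) (g : G) :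
    Lp ℝ p μ →+ Lp ℝ p μ :=
  Lp.compOfMapEqSmul (measurable_mul_const g) (hc g) (ne_top_of_map_mul_right_eq_smul hc g) hp

theorem coeFn_rightTranslateLp (hc : ∀ g, μ.map (· * g) = c g • μ) (hp : p ≠ ∞) (g : G)
    (f : Lp ℝ p μ) : rightTranslateLp hc hp g f =ᵐ[μ] fun x => f (x * g) :=
  Lp.coeFn_compOfMapEqSmul _ _ _ _ f

theorem norm_rightTranslateLp (hc : ∀ g, μ.map (· * g) = c g • μ) (hp : p ≠ ∞) (g : G)
    (f : Lp ℝ p μ) : ‖rightTranslateLp hc hp g f‖ = (c g).toReal ^ (1 / p).toReal * ‖f‖ :=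
  Lp.norm_compOfMapEqSmul _ _ _ _ f

theorem continuous_rightTranslateLp [Fact (1 ≤ p)] (hc : ∀ g, μ.map (· * g) = c g • μ)
    (hp : p ≠ ∞) (g : G) : Continuous (rightTranslateLp hc hp g) :=
  Lp.continuous_compOfMapEqSmul _ _ _ _

theorem rightTranslateLp_apply_eq_sub (hc : ∀ g, μ.map (· * g) = c g • μ) (hp : p ≠ ∞)
    (hF : ∀ g, ⇑(F g) =ᵐ[μ] fun h => u h - u (h * g)) (g h : G) :
    rightTranslateLp hc hp g (F h) = F (g * h) - F g := by
  apply Lp.ext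
  filter_upwards [coeFn_rightTranslateLp hc hp g (F h),
    (quasiMeasurePreserving_of_map_eq_smul (measurable_mul_const g) (hc g)).ae_eq_comp (hF h),
    Lp.coeFn_sub (F (g * h)) (F g), hF (g * h), hF g] with x hT hFh hsub hFgh hFg
  simp only [Function.comp_apply] at hFh
  rw [hT, hFh, hsub, Pi.sub_apply, hFgh, hFg, mul_assoc]
  ring

theorem coeFn_add_rightTranslateLp_sub (hc : ∀ g, μ.map (· * g) = c g • μ) (hp : p ≠ ∞)
    (hF : ∀ g, ⇑(F g) =ᵐ[μ] fun h => u h - u (h * g)) (w : Lp ℝ p μ) (g : G) :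
    ⇑(F g + rightTranslateLp hc hp g w - w) =ᵐ[μ]
      fun h => (u h - w h) - (u (h * g) - w (h * g)) := by
  filter_upwards [Lp.coeFn_sub (F g + rightTranslateLp hc hp g w) w,
    Lp.coeFn_add (F g) (rightTranslateLp hc hp g w), coeFn_rightTranslateLp hc hp g w, hF g]
    with x hsub hadd hT hFg
  rw [hsub, Pi.sub_apply, hadd, Pi.add_apply, hT, hFg]
  ring

theorem norm_sub_mul_pow_succ (hc : ∀ g, μ.map (· * g) = c g • μ) (hp : p ≠ ∞)
    (hF : ∀ g, ⇑(F g) =ᵐ[μ] fun h => u h - u (h * g)) (g ξ : G) (n : ℕ) :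
    ‖F (g * ξ ^ (n + 1)) - F (g * ξ ^ n)‖ =
      (c g).toReal ^ (1 / p).toReal * ‖F ξ‖ * ((c ξ).toReal ^ (1 / p).toReal) ^ n := by
  have hpow (n : ℕ) : c (g * ξ ^ n) = c g * c ξ ^ n := by
    induction n with
    | zero => simp
    | succ n ih =>
      rw [pow_succ, ← mul_assoc, map_mul_of_map_mul_right_eq_smul hc, ih, pow_succ, mul_assoc]
  rw [pow_succ, ← mul_assoc, ← rightTranslateLp_apply_eq_sub hc hp hF, norm_rightTranslateLp,
    hpow, ENNReal.toReal_mul, ENNReal.toReal_pow, Real.mul_rpow (by positivity) (by positivity),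
    ← Real.rpow_natCast, ← Real.rpow_natCast, ← Real.rpow_mul (by positivity),
    ← Real.rpow_mul (by positivity), mul_comm (n : ℝ)]
  ring

theorem exists_continuous_tendsto_mul_pow [Fact (1 ≤ p)] (hc : ∀ g, μ.map (· * g) = c g • μ)
    (hp : p ≠ ∞) (hF_cont : Continuous F) (hF : ∀ g, ⇑(F g) =ᵐ[μ] fun h => u h - u (h * g))
    {ξ : G} (hξ : c ξ < 1) :
    ∃ W : G → Lp ℝ p μ, Continuous W ∧
      ∀ g, Tendsto (fun n => F (g * ξ ^ n)) atTop (𝓝 (W g)) := by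
  have hp₀ : p ≠ 0 := (zero_lt_one.trans_le (Fact.out : (1 : ℝ≥0∞) ≤ p)).ne'
  have hq : 0 < (1 / p).toReal := ENNReal.toReal_pos (by simpa using hp) (by simpa using hp₀)
  have hξ' : (c ξ).toReal < 1 := by
    simpa using (ENNReal.toReal_lt_toReal (ne_top_of_lt hξ) ENNReal.one_ne_top).mpr hξ
  refine exists_continuous_tendsto_of_dist_le_geometric (by positivity)
    (Real.rpow_lt_one ENNReal.toReal_nonneg hξ' hq)
    (fun n => hF_cont.comp (continuous_mul_const _)) fun g₀ => ?_
  obtain ⟨L, hL, hLn⟩ := exists_compact_mem_nhds g₀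
  obtain ⟨M, hM, hle⟩ := exists_le_of_map_mul_right_eq_smul hc hL
  refine ⟨M.toReal ^ (1 / p).toReal * ‖F ξ‖, Filter.mem_of_superset hLn fun g hg n => ?_⟩
  rw [dist_comm, dist_eq_norm, norm_sub_mul_pow_succ hc hp hF]
  gcongr
  exact hle g hg

theorem MemDirichlet.exists_invariant_of_map_mul_right_eq_smul [Fact (1 ≤ p)]
    (hc : ∀ g, μ.map (· * g) = c g • μ) (hp : p ≠ ∞) {ξ : G} (hξ : c ξ < 1)
    (hu : MemDirichlet μ p u) :
    ∃ v : G → ℝ, MemDirichlet μ p v ∧ MemLp (fun x => u x - v x) p μ ∧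
      (fun h => v (h * ξ)) =ᵐ[μ] v := by
  obtain ⟨hu_meas, F, hF_cont, hF⟩ := hu
  obtain ⟨W, hW_cont, hW⟩ := exists_continuous_tendsto_mul_pow hc hp hF_cont hF hξ
  have hv := coeFn_add_rightTranslateLp_sub hc hp hF (W 1)
  set T := rightTranslateLp hc hp
  set w := W 1
  have hw : Tendsto (fun n => F (ξ ^ n)) atTop (𝓝 w) := by simpa using hW 1
  have hWT (g : G) : W g = F g + T g w := by
    have hlim : Tendsto (fun n => F (g * ξ ^ n) - F g) atTop (𝓝 (T g w)) := by
      simpa only [T, Function.comp_def, rightTranslateLp_apply_eq_sub hc hp hF] using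
        ((continuous_rightTranslateLp hc hp g).tendsto w).comp hw
    rw [← tendsto_nhds_unique ((hW g).sub_const (F g)) hlim, add_sub_cancel]
  have hWξ : W ξ = w := by
    have hw_succ := hw.comp (tendsto_add_atTop_nat 1)
    simp only [Function.comp_def, pow_succ'] at hw_succ
    exact tendsto_nhds_unique (hW ξ) hw_succ
  refine ⟨fun x => u x - w x,
    ⟨hu_meas.sub (Lp.aestronglyMeasurable w), fun g => F g + T g w - w, ?_, hv⟩,
    by simpa using Lp.memLp w, ?_⟩
  · simp only [← hWT]
    exact hW_cont.sub continuous_const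
  · have hzero : F ξ + T ξ w - w = 0 := by rw [← hWT, hWξ, sub_self]
    filter_upwards [hv ξ, hzero ▸ Lp.coeFn_zero ℝ p μ] with x hvx hx
    rw [hx, Pi.zero_apply] at hvx
    linarith

end Dirichlet

/-- Fix `ξ ∈ G` with `Δ(ξ) > 1` and `p ∈ [1,∞)`. Then for every `u ∈ D^p(G)` there exists
`u_∞ ∈ D^p(G)` such that `u − u_∞ ∈ L^p(G,μ)` and `ρ(ξ)u_∞ = u_∞` μ-a.e. -/
theorem dirichlet_exists_xi_invariant
    {G : Type*} [Group G] [TopologicalSpace G] [IsTopologicalGroup G]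
    [LocallyCompactSpace G] [MeasurableSpace G] [BorelSpace G]
    (μ : Measure G) [μ.IsHaarMeasure]
    (Δ : G → ℝ)
    (hΔ : ∀ (g : G) (E : Set G), MeasurableSet E →
      μ ((fun x => x * g) '' E) = ENNReal.ofReal (Δ g) * μ E)
    (p : ℝ≥0∞) [Fact (1 ≤ p)] (hp2 : p ≠ ∞)
    (ξ : G) (hξ : 1 < Δ ξ)
    (u : G → ℝ) (hu : MemDirichlet μ p u) :
    ∃ v : G → ℝ, MemDirichlet μ p v ∧ MemLp (fun x => u x - v x) p μ ∧
      (fun h => v (h * ξ)) =ᵐ[μ] v := by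
  have hc := map_mul_right_eq_ofReal_smul hΔ
  exact hu.exists_invariant_of_map_mul_right_eq_smul hc hp2
    (lt_one_of_map_mul_right_eq_smul hc (by rwa [inv_inv, ENNReal.one_lt_ofReal]))
end

section
/- Let G be a locally compact group admitting a contraction, i.e. a topological group automorphism α of G admitting a compact vacuum subset. Then the quotient topological group G/G₀ of G by its identity component is elliptic. -/
/-
`Q = G ⧸ G₀` is totally disconnected and the contraction descends to it, so it suffices to treat
a totally disconnected locally compact group `Q` with an automorphism `e` and a compact vacuum
set `U`. A compact set `A` with `e '' A = A` equals `e^[k] '' A ⊆ U`; such sets are closed under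
products and inverses, so their union is a subgroup inside `U`, whose closure `P₀` is compact.
The ω-limit set `Ω` of a compact `K` is compact and `e`-invariant, hence `Ω ⊆ P₀ ⊆ P` for a
compact open subgroup `P` (the stabiliser of `P₀ * V`, `V` a compact open neighbourhood of `1`).
As `Ω` attracts `K`, some `e^[n]` maps `K` into `P`, and `K` lies in the compact subgroup
`e^[n] ⁻¹' P`.
-/

instance Subgroup.connectedComponentOfOne_normal (G : Type*) [Group G] [TopologicalSpace G]
    [IsTopologicalGroup G] : (Subgroup.connectedComponentOfOne G).Normal where
  conj_mem n hn g := by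
    have hc : Continuous fun x : G => g * x * g⁻¹ := by continuity
    have h := hc.image_connectedComponent_subset (1 : G)
    have hmem : g * n * g⁻¹ ∈ (fun x : G => g * x * g⁻¹) '' connectedComponent (1 : G) :=
      ⟨n, hn, rfl⟩
    exact (by simpa using h hmem : g * n * g⁻¹ ∈ connectedComponent (1 : G))

open Set Filter Topology Function Pointwise omegaLimit

def IsVacuum {X : Type*} [TopologicalSpace X] (f : X → X) (U : Set X) : Prop :=
  ∀ M, IsCompact M → ∀ᶠ k in atTop, f^[k] '' M ⊆ U

section Vacuum

variable {X Y : Type*} [TopologicalSpace X] [TopologicalSpace Y] {f : X → X} {U : Set X}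

theorem IsVacuum.eventually_mapsTo (hU : IsVacuum f U) {M : Set X} (hM : IsCompact M) :
    ∀ᶠ k in atTop, MapsTo f^[k] M U := by
  simpa only [mapsTo_iff_image_subset] using hU M hM

theorem IsVacuum.subset_of_image_eq (hU : IsVacuum f U) {A : Set X} (hA : IsCompact A)
    (hfA : f '' A = A) : A ⊆ U := by
  obtain ⟨k, hk⟩ := (hU A hA).exists
  rwa [(IsFixedPt.image_iterate hfA k).eq] at hk

theorem IsVacuum.image {g : Y → Y} {π : X → Y} (hπ : Semiconj π f g)
    (hlift : ∀ K, IsCompact K → ∃ L, IsCompact L ∧ K ⊆ π '' L) (hU : IsVacuum f U) :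
    IsVacuum g (π '' U) := by
  intro K hK
  obtain ⟨L, hL, hKL⟩ := hlift K hK
  filter_upwards [hU L hL] with k hk
  calc g^[k] '' K ⊆ g^[k] '' (π '' L) := image_mono hKL
    _ = π '' (f^[k] '' L) := by simp only [image_image, (hπ.iterate_right k).eq]
    _ ⊆ π '' U := image_mono hk

end Vacuum

section OmegaLimit

variable {X : Type*} [TopologicalSpace X]

theorem image_omegaLimit_iterate (h : X ≃ₜ X) (s : Set X) :
    h '' ω⁺ (fun n x ↦ h^[n] x) s = ω⁺ (fun n x ↦ h^[n] x) s := by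
  have fwd : MapsTo h (ω⁺ (fun n x ↦ h^[n] x) s) (ω⁺ (fun n x ↦ h^[n] x) s) :=
    (mapsTo_omegaLimit (ϕ' := fun n x ↦ h^[n + 1] x) s (mapsTo_id s)
      (fun n x ↦ (iterate_succ_apply' h n x).symm) h.continuous).mono_right
      (omegaLimit_subset_of_tendsto _ s (tendsto_add_atTop_nat 1))
  have bwd : MapsTo h.symm (ω⁺ (fun n x ↦ h^[n] x) s) (ω⁺ (fun n x ↦ h^[n] x) s) := by
    refine (mapsTo_omegaLimit' (ϕ' := fun n x ↦ h^[n - 1] x) s (mapsTo_id s) ?_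
      h.symm.continuous).mono_right
      (omegaLimit_subset_of_tendsto _ s (tendsto_sub_atTop_nat 1))
    filter_upwards [eventually_ge_atTop 1] with n hn x _
    obtain ⟨m, rfl⟩ := Nat.exists_eq_add_of_le' hn
    simp [iterate_succ_apply']
  exact fwd.image_subset.antisymm fun x hx ↦ ⟨h.symm x, bwd hx, h.apply_symm_apply x⟩

theorem IsVacuum.isCompact_omegaLimit [T2Space X] {f : X → X} {U : Set X} (hU : IsVacuum f U)
    (hUc : IsCompact U) {s : Set X} (hs : IsCompact s) :
    IsCompact (ω⁺ (fun n x ↦ f^[n] x) s) := by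
  obtain ⟨N, hN⟩ := eventually_atTop.1 (hU.eventually_mapsTo hs)
  refine hUc.of_isClosed_subset (isClosed_omegaLimit _ _ _)
    ((omegaLimit_subset_closure_image2 _ _ _ (Ici_mem_atTop N)).trans
      (closure_minimal ?_ hUc.isClosed))
  rintro _ ⟨k, hk, x, hx, rfl⟩
  exact hN k hk hx

end OmegaLimit

theorem exists_isCompact_isOpen_mem {X : Type*} [TopologicalSpace X] [LocallyCompactSpace X]
    [T2Space X] [TotallyDisconnectedSpace X] (x : X) :
    ∃ V : Set X, IsCompact V ∧ IsOpen V ∧ x ∈ V := by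
  obtain ⟨C, hC, hCx⟩ := exists_compact_mem_nhds x
  obtain ⟨V, hV, hxV, hVC⟩ := loc_compact_Haus_tot_disc_of_zero_dim.mem_nhds_iff.1 hCx
  exact ⟨V, hC.of_isClosed_subset hV.isClosed hVC, hV.isOpen, hxV⟩

theorem IsOpenMap.exists_isCompact_subset_image {X Y : Type*} [TopologicalSpace X]
    [TopologicalSpace Y] [WeaklyLocallyCompactSpace X] {f : X → Y} (hf : IsOpenMap f)
    (hsurj : Surjective f) {K : Set Y} (hK : IsCompact K) :
    ∃ L : Set X, IsCompact L ∧ K ⊆ f '' L := by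
  have hcover : K ⊆ ⋃ L : TopologicalSpace.Compacts X, f '' interior L := by
    rintro y -
    obtain ⟨x, rfl⟩ := hsurj y
    obtain ⟨C, hC, hCx⟩ := exists_compact_mem_nhds x
    exact mem_iUnion.2 ⟨⟨C, hC⟩, mem_image_of_mem f (mem_interior_iff_mem_nhds.2 hCx)⟩
  obtain ⟨L, hL⟩ := hK.elim_directed_cover _ (fun L ↦ hf _ isOpen_interior) hcover
    (Monotone.directed_le fun L L' hLL' ↦ image_mono (interior_mono hLL'))
  exact ⟨L, L.isCompact, hL.trans (image_mono interior_subset)⟩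

section TopologicalGroup

variable {G : Type*} [Group G] [TopologicalSpace G] [IsTopologicalGroup G]

def invariantCompactsUnion (e : G ≃* G) : Subgroup G where
  carrier := {x | ∃ A : Set G, IsCompact A ∧ e '' A = A ∧ x ∈ A}
  one_mem' := ⟨{1}, isCompact_singleton, by simp, rfl⟩
  mul_mem' := by
    rintro x y ⟨A, hA, heA, hx⟩ ⟨B, hB, heB, hy⟩
    exact ⟨A * B, hA.mul hB, by rw [image_mul, heA, heB], mul_mem_mul hx hy⟩
  inv_mem' := by
    rintro x ⟨A, hA, heA, hx⟩
    exact ⟨A⁻¹, hA.inv, by rw [image_inv, heA], inv_mem_inv.2 hx⟩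

theorem isCompact_topologicalClosure_invariantCompactsUnion {e : G ≃* G} {U : Set G}
    (hU : IsVacuum e U) (hUc : IsCompact U) :
    IsCompact ((invariantCompactsUnion e).topologicalClosure : Set G) := by
  rw [Subgroup.topologicalClosure_coe]
  exact hUc.closure_of_subset fun x ⟨A, hA, heA, hx⟩ ↦ hU.subset_of_image_eq hA heA hx

theorem isOpen_stabilizer_of_isCompact_of_isOpen {V : Set G} (hVc : IsCompact V)
    (hVo : IsOpen V) : IsOpen (MulAction.stabilizer G V : Set G) := by
  obtain ⟨T, hT, hTV⟩ := compact_open_separated_mul_left hVc hVo subset_rfl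
  have hsub : ∀ g ∈ T, g • V ⊆ V := fun g hg ↦ (smul_set_subset_mul hg).trans hTV
  refine Subgroup.isOpen_of_mem_nhds _ (mem_of_superset (inter_mem hT (inv_mem_nhds_one G hT)) ?_)
  rintro g ⟨hg, hg'⟩
  exact (hsub g hg).antisymm (subset_smul_set_iff.2 (hsub _ hg'))

theorem exists_isCompact_isOpen_subgroup_ge [LocallyCompactSpace G] [T2Space G]
    [TotallyDisconnectedSpace G] {K : Subgroup G} (hK : IsCompact (K : Set G)) :
    ∃ P : Subgroup G, IsCompact (P : Set G) ∧ IsOpen (P : Set G) ∧ K ≤ P := by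
  obtain ⟨V, hVc, hVo, h1V⟩ := exists_isCompact_isOpen_mem (1 : G)
  have hW1 : (1 : G) ∈ (K : Set G) * V := ⟨1, K.one_mem, 1, h1V, one_mul 1⟩
  have hWc : IsCompact ((K : Set G) * V) := hK.mul hVc
  have hopen := isOpen_stabilizer_of_isCompact_of_isOpen hWc hVo.mul_left
  refine ⟨MulAction.stabilizer G ((K : Set G) * V), hWc.of_isClosed_subset
    (Subgroup.isClosed_of_isOpen _ hopen) fun g hg ↦ ?_, hopen, fun k hk ↦ ?_⟩
  · rw [SetLike.mem_coe, MulAction.mem_stabilizer_iff] at hg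
    simpa [hg] using smul_mem_smul_set (a := g) hW1
  · rw [MulAction.mem_stabilizer_iff, ← smul_mul_assoc k (K : Set G) V, smul_coe_set hk]

instance : TotallyDisconnectedSpace (G ⧸ Subgroup.connectedComponentOfOne G) := by
  have hfib : ∀ y : G ⧸ Subgroup.connectedComponentOfOne G,
      IsConnected ((↑) ⁻¹' {y} : Set G) := by
    intro y
    obtain ⟨g, rfl⟩ := QuotientGroup.mk_surjective y
    rw [← image_singleton, QuotientGroup.preimage_image_mk_eq_mul, singleton_mul]
    exact isConnected_connectedComponent.image _ (continuous_const_mul g).continuousOn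
  rw [totallyDisconnectedSpace_iff_connectedComponent_one, ← QuotientGroup.mk_one,
    ← (QuotientGroup.isQuotientMap_mk _).isCoinducing.image_connectedComponent hfib]
  change QuotientGroup.mk '' (Subgroup.connectedComponentOfOne G : Set G) = _
  rw [← QuotientGroup.preimage_mk_one, image_preimage_eq _ QuotientGroup.mk_surjective]

theorem Subgroup.map_connectedComponentOfOne (e : G ≃ₜ* G) :
    (connectedComponentOfOne G).map (e : G →* G) = connectedComponentOfOne G := by
  have h : e.toHomeomorph '' connectedComponent (1 : G) = connectedComponent 1 := by
    simpa [connectedComponentIn_univ] using e.toHomeomorph.image_connectedComponentIn (mem_univ 1)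
  exact SetLike.coe_injective h

end TopologicalGroup

def QuotientGroup.continuousCongr {G H : Type*} [Group G] [Group H] [TopologicalSpace G]
    [TopologicalSpace H] (N : Subgroup G) (M : Subgroup H) [N.Normal] [M.Normal] (e : G ≃ₜ* H)
    (he : N.map (e : G →* H) = M) : G ⧸ N ≃ₜ* H ⧸ M where
  toMulEquiv := QuotientGroup.congr N M e he
  continuous_toFun := (QuotientGroup.isQuotientMap_mk N).continuous_iff.2
    (QuotientGroup.continuous_mk.comp e.continuous)
  continuous_invFun := (QuotientGroup.isQuotientMap_mk M).continuous_iff.2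
    (QuotientGroup.continuous_mk.comp e.symm.continuous)

theorem exists_isCompact_subgroup_superset_of_mapsTo_iterate {Q : Type*} [Group Q]
    [TopologicalSpace Q] (e : Q ≃ₜ* Q) (n : ℕ) {K : Set Q} {P : Subgroup Q}
    (hP : IsCompact (P : Set Q)) (hKP : MapsTo (⇑e)^[n] K P) :
    ∃ L : Subgroup Q, IsCompact (L : Set Q) ∧ K ⊆ L := by
  induction n generalizing K with
  | zero => exact ⟨P, hP, hKP⟩
  | succ n ih =>
    obtain ⟨L, hL, heKL⟩ := ih (K := e '' K) fun _ ⟨x, hx, hex⟩ ↦ hex ▸ hKP hx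
    exact ⟨L.comap (e : Q →* Q), e.toHomeomorph.isCompact_preimage.2 hL,
      fun x hx ↦ heKL ⟨x, hx, rfl⟩⟩

theorem exists_isCompact_subgroup_superset_of_isVacuum {Q : Type*} [Group Q]
    [TopologicalSpace Q] [IsTopologicalGroup Q] [LocallyCompactSpace Q] [T2Space Q]
    [TotallyDisconnectedSpace Q]
    (e : Q ≃ₜ* Q) {U : Set Q} (hUc : IsCompact U) (hU : IsVacuum e U) {K : Set Q}
    (hK : IsCompact K) : ∃ L : Subgroup Q, IsCompact (L : Set Q) ∧ K ⊆ L := by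
  set Ω := ω⁺ (fun n x ↦ (⇑e)^[n] x) K
  have hΩc : IsCompact Ω := hU.isCompact_omegaLimit hUc hK
  have hΩe : e '' Ω = Ω := image_omegaLimit_iterate e.toHomeomorph K
  set P₀ := (invariantCompactsUnion e.toMulEquiv).topologicalClosure
  have hΩP₀ : Ω ⊆ P₀ := fun x hx ↦ Subgroup.le_topologicalClosure _ ⟨Ω, hΩc, hΩe, hx⟩
  obtain ⟨P, hPc, hPo, hP₀P⟩ := exists_isCompact_isOpen_subgroup_ge
    (isCompact_topologicalClosure_invariantCompactsUnion hU hUc)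
  obtain ⟨n, hn⟩ := (eventually_mapsTo_of_isCompact_absorbing_of_isOpen_of_omegaLimit_subset
    _ _ _ hUc (hU.eventually_mapsTo hK) hPo (hΩP₀.trans hP₀P)).exists
  exact exists_isCompact_subgroup_superset_of_mapsTo_iterate e n hPc hn

/-- If a locally compact group `G` admits a contraction (a topological group automorphism
with a compact vacuum subset), then the quotient `G/G₀` by the identity component is
elliptic: every compact subset of `G/G₀` is contained in a compact subgroup. -/
theorem quotient_by_identityComponent_elliptic
    {G : Type*} [Group G] [TopologicalSpace G] [IsTopologicalGroup G] [LocallyCompactSpace G]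
    (α : G ≃* G) (hα : Continuous ⇑α) (hα' : Continuous ⇑α.symm)
    (hcontr : ∃ U : Set G, IsCompact U ∧ ∀ M : Set G, IsCompact M →
      ∃ N : ℕ, ∀ k ≥ N, (⇑α)^[k] '' M ⊆ U) :
    ∀ K : Set (G ⧸ Subgroup.connectedComponentOfOne G), IsCompact K →
      ∃ L : Subgroup (G ⧸ Subgroup.connectedComponentOfOne G),
        IsCompact (L : Set (G ⧸ Subgroup.connectedComponentOfOne G)) ∧ K ⊆ (L : Set _) := by
  obtain ⟨U, hUc, hU⟩ := hcontr
  -- makes `G ⧸ G₀` Hausdorff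
  have : IsClosed (Subgroup.connectedComponentOfOne G : Set G) := isClosed_connectedComponent
  let e : G ≃ₜ* G := { α with continuous_toFun := hα, continuous_invFun := hα' }
  let ē := QuotientGroup.continuousCongr _ _ e (Subgroup.map_connectedComponentOfOne e)
  have hvac : IsVacuum ē ((↑) '' U) :=
    IsVacuum.image (f := α) (fun _ ↦ rfl)
      (fun _ ↦ QuotientGroup.isOpenMap_coe.exists_isCompact_subset_image
        QuotientGroup.mk_surjective)
      fun M hM ↦ eventually_atTop.2 (hU M hM)
  exact fun K hK ↦ exists_isCompact_subgroup_superset_of_isVacuum ē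
    (hUc.image QuotientGroup.continuous_mk) hvac hK
end

section
/- Fix p ∈ [1,∞). Let (X,d,μ) be a metric measure space of bounded geometry and let Y ⊆ X be a discretization of X with covering radius R. For T ≥ R set S_T(x) = Σ_{z ∈ Y} 1_{B(z,T)}(x) (which satisfies 1 ≤ S_T(x) < ∞ for all x) and, for f : Y → ℝ, define φ_T f(x) = Σ_{z ∈ Y} f(z)·1_{B(z,T)}(x)/S_T(x). Then for every s ≥ T there exists a constant C > 0 (depending only on p, s, T and the bounded-geometry data) such that for every f : Y → ℝ one has ∫∫_{{(x,x') ∈ X×X : d(x,x') ≤ s}} |φ_T f(x) − φ_T f(x')|^p dμ(x) dμ(x') ≤ C · Σ_{(z,z') ∈ Y×Y, d(z,z') ≤ 6s} |f(z) − f(z')|^p. -/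
open MeasureTheory
open scoped ENNReal

/-- `S_T(x) = Σ_{z ∈ Y} 1_{B(z,T)}(x)`, the number of points of `Y` at distance `≤ T`
from `x`. -/
noncomputable def STcount {X : Type*} [MetricSpace X] (Y : Set X) (T : ℝ) (x : X) : ℕ :=
  Set.ncard {y ∈ Y | dist x y ≤ T}

/-- `φ_T f (x) = Σ_{z ∈ Y} f(z)·1_{B(z,T)}(x) / S_T(x)`, the extension operator from a
discretization `Y` back to `X`. -/
noncomputable def phiT {X : Type*} [MetricSpace X] (Y : Set X) (T : ℝ) (f : X → ℝ)
    (x : X) : ℝ :=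
  (∑ᶠ y ∈ {y ∈ Y | dist x y ≤ T}, f y) / (STcount Y T x : ℝ)

/-! φ_T f(x) is the mean of `f` over the finite nonempty set `Y ∩ B(x,T)`, and the difference
of two means is at most some difference `|f a - f b|` with `a ∈ B(x,T)`, `b ∈ B(x',T)`; if
`d(x,x') ≤ s` then `d(a,b) ≤ 2T + s ≤ 6s`. So on `{d ≤ s}` the integrand is dominated by
`Σ |f a - f b|^p 1_{B(a,T) × B(b,T)}`, and integrating gives `C = V(T)²`.

Bounded geometry enters through packing: the disjoint balls of radius `ε/3` around the points
of an `ε`-separated set inside a ball have measure `≥ v(ε/3)` each and fit into a ball of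
finite measure. Hence `Y ∩ B(x,T)` is finite, `Y` is countable, and `X` is second countable,
which makes `{d ≤ s}` measurable in `X × X`. -/

open Function Metric Set
open scoped BigOperators

namespace Metric

lemma exists_maximal_isSeparated {X : Type*} [PseudoEMetricSpace X] (ε : ℝ≥0∞) (s : Set X) :
    ∃ N, Maximal (fun N ↦ N ⊆ s ∧ IsSeparated ε N) N :=
  zorn_subset {N | N ⊆ s ∧ IsSeparated ε N} fun c hcS hc =>
    ⟨⋃₀ c, ⟨sUnion_subset fun _ ht => (hcS ht).1, hc.pairwise_sUnion.2 fun _ ht => (hcS ht).2⟩,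
      fun _ => subset_sUnion_of_mem⟩

lemma secondCountable_of_countable_of_pairwise_le_dist {X : Type*} [PseudoMetricSpace X]
    (h : ∀ ε > (0 : ℝ), ∀ N : Set X, N.Pairwise (ε ≤ dist · ·) → N.Countable) :
    SecondCountableTopology X := by
  refine secondCountable_of_almost_dense_set fun ε hε => ?_
  obtain ⟨N, hN⟩ := exists_maximal_isSeparated (ε.toNNReal : ℝ≥0∞) (univ : Set X)
  have hcover := (IsCover.of_maximal_isSeparated hN).subset_iUnion_closedBall
  refine ⟨N, h ε hε N fun a ha b hb hab => ?_, fun x => ?_⟩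
  · have : ENNReal.ofReal ε < ENNReal.ofReal (dist a b) := edist_dist a b ▸ hN.1.2 ha hb hab
    exact ((ENNReal.ofReal_lt_ofReal_iff'.1 this).1).le
  · obtain ⟨y, hy, hxy⟩ := mem_iUnion₂.1 (hcover (mem_univ x))
    exact ⟨y, hy, by simpa [hε.le] using hxy⟩

end Metric

namespace Finset

lemma exists_abs_expect_sub_expect_le {ι : Type*} {A B : Finset ι} (hA : A.Nonempty)
    (hB : B.Nonempty) (f : ι → ℝ) :
    ∃ a ∈ A, ∃ b ∈ B, |𝔼 i ∈ A, f i - 𝔼 i ∈ B, f i| ≤ |f a - f b| := by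
  have hdiff : 𝔼 i ∈ A, f i - 𝔼 i ∈ B, f i = 𝔼 q ∈ A ×ˢ B, (f q.1 - f q.2) := by
    simp only [expect_product, expect_sub_distrib, expect_const hA, expect_const hB]
  obtain ⟨q, hq, hle⟩ := exists_le_of_le_expect (hA.product hB)
    (hdiff ▸ abs_expect_le _ _ : |𝔼 i ∈ A, f i - 𝔼 i ∈ B, f i| ≤ 𝔼 q ∈ A ×ˢ B, |f q.1 - f q.2|)
  exact ⟨q.1, (mem_product.1 hq).1, q.2, (mem_product.1 hq).2, hle⟩

end Finset

section Packing

variable {X : Type*} [MetricSpace X] [MeasurableSpace X] [OpensMeasurableSpace X]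
  {μ : Measure X}

theorem finite_of_pairwise_lt_dist_of_le_measure_closedBall {A : Set X} {x₀ : X} {r δ : ℝ}
    {c : ℝ≥0∞} (hc : c ≠ 0) (hlow : ∀ a ∈ A, c ≤ μ (closedBall a δ))
    (hfin : μ (closedBall x₀ (r + δ)) ≠ ∞) (hA : A.Pairwise (2 * δ < dist · ·))
    (hAr : A ⊆ closedBall x₀ r) : A.Finite := by
  have hdisj : Pairwise (Disjoint on fun a : A => closedBall (a : X) δ) := fun a b hab =>
    closedBall_disjoint_closedBall <| by linarith [hA a.2 b.2 (Subtype.coe_ne_coe.2 hab)]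
  have hsub : ⋃ a : A, closedBall (a : X) δ ⊆ closedBall x₀ (r + δ) := iUnion_subset fun a =>
    closedBall_subset_closedBall' <| by linarith [mem_closedBall.1 (hAr a.2)]
  have hsum : ∑' a : A, μ (closedBall a δ) ≠ ∞ := ne_top_of_le_ne_top hfin <|
    (tsum_meas_le_meas_iUnion_of_disjoint μ (fun _ => measurableSet_closedBall) hdisj).trans
      (measure_mono hsub)
  have hall := ENNReal.finite_const_le_of_tsum_ne_top hsum hc
  rw [eq_univ_of_forall (s := {a : A | c ≤ μ (closedBall a δ)}) fun a => hlow a a.2,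
    finite_univ_iff] at hall
  exact A.toFinite

theorem finite_of_pairwise_le_dist_of_subset_closedBall
    (hlow : ∀ δ > (0 : ℝ), ∃ c ≠ 0, ∀ x : X, c ≤ μ (closedBall x δ))
    (hup : ∀ (x : X), ∀ r > (0 : ℝ), μ (closedBall x r) ≠ ∞) {A : Set X} {ε r : ℝ} {x₀ : X}
    (hε : 0 < ε) (hA : A.Pairwise (ε ≤ dist · ·)) (hAr : A ⊆ closedBall x₀ r) : A.Finite := by
  obtain ⟨c, hc, hc_le⟩ := hlow (ε / 3) (by positivity)
  refine finite_of_pairwise_lt_dist_of_le_measure_closedBall hc (fun a _ => hc_le a)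
    (hup x₀ _ (by positivity)) (hA.imp fun a b h => by linarith)
    (hAr.trans (closedBall_subset_closedBall (le_abs_self r)))

theorem countable_of_pairwise_le_dist
    (hlow : ∀ δ > (0 : ℝ), ∃ c ≠ 0, ∀ x : X, c ≤ μ (closedBall x δ))
    (hup : ∀ (x : X), ∀ r > (0 : ℝ), μ (closedBall x r) ≠ ∞) {A : Set X} {ε : ℝ}
    (hε : 0 < ε) (hA : A.Pairwise (ε ≤ dist · ·)) : A.Countable := by
  rcases A.eq_empty_or_nonempty with rfl | ⟨a₀, -⟩
  · exact countable_empty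
  have hcover : A ⊆ ⋃ n : ℕ, A ∩ closedBall a₀ n := fun a ha =>
    mem_iUnion.2 ⟨⌈dist a a₀⌉₊, ha, mem_closedBall.2 (Nat.le_ceil _)⟩
  exact (countable_iUnion fun n => (finite_of_pairwise_le_dist_of_subset_closedBall hlow hup hε
    (hA.mono inter_subset_left) inter_subset_right).countable).mono hcover

end Packing

theorem setLIntegral_le_mul_tsum_of_forall_exists {Z ι : Type*} [MeasurableSpace Z] [Countable ι]
    {ν : Measure Z} {D : Set Z} (hD : MeasurableSet D) {S : ι → Set Z}
    (hS : ∀ i, MeasurableSet (S i)) {M : ℝ≥0∞} (hM : ∀ i, ν (S i) ≤ M) {F : Z → ℝ≥0∞}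
    (a : ι → ℝ≥0∞) (hF : ∀ z ∈ D, ∃ i, z ∈ S i ∧ F z ≤ a i) :
    ∫⁻ z in D, F z ∂ν ≤ M * ∑' i, a i := by
  have hF_le : ∀ z ∈ D, F z ≤ ∑' i, (S i).indicator (fun _ => a i) z := fun z hz => by
    obtain ⟨i, hi, hle⟩ := hF z hz
    exact hle.trans ((indicator_of_mem hi (fun _ => a i)).symm.le.trans (ENNReal.le_tsum i))
  calc ∫⁻ z in D, F z ∂ν ≤ ∫⁻ z in D, ∑' i, (S i).indicator (fun _ => a i) z ∂ν :=
        setLIntegral_mono' hD hF_le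
    _ ≤ ∫⁻ z, ∑' i, (S i).indicator (fun _ => a i) z ∂ν := setLIntegral_le_lintegral _ _
    _ = ∑' i, a i * ν (S i) := by
        rw [lintegral_tsum fun i => (measurable_const.indicator (hS i)).aemeasurable]
        exact tsum_congr fun i => lintegral_indicator_const (hS i) _
    _ ≤ ∑' i, a i * M := ENNReal.tsum_le_tsum fun i => by gcongr; exact hM i
    _ = M * ∑' i, a i := by rw [ENNReal.tsum_mul_right, mul_comm]

section Extension

variable {X : Type*} [MetricSpace X] {Y : Set X} {T : ℝ}

theorem phiT_eq_expect {x : X} (h : {y ∈ Y | dist x y ≤ T}.Finite) (f : X → ℝ) :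
    phiT Y T f x = 𝔼 y ∈ h.toFinset, f y := by
  rw [phiT, STcount, finsum_mem_eq_finite_toFinset_sum f h, ncard_eq_toFinset_card _ h,
    Finset.expect_eq_sum_div_card]

theorem exists_abs_phiT_sub_phiT_le (hfin : ∀ x, {y ∈ Y | dist x y ≤ T}.Finite)
    (hne : ∀ x, ∃ y ∈ Y, dist x y ≤ T) (f : X → ℝ) (x x' : X) :
    ∃ a ∈ Y, ∃ b ∈ Y, dist x a ≤ T ∧ dist x' b ≤ T ∧
      |phiT Y T f x - phiT Y T f x'| ≤ |f a - f b| := by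
  have hnonempty : ∀ x, (hfin x).toFinset.Nonempty := fun x =>
    (hne x).imp fun y hy => (hfin x).mem_toFinset.2 hy
  obtain ⟨a, ha, b, hb, hle⟩ :=
    Finset.exists_abs_expect_sub_expect_le (hnonempty x) (hnonempty x') f
  rw [Finite.mem_toFinset] at ha hb
  exact ⟨a, ha.1, b, hb.1, ha.2, hb.2, by rwa [phiT_eq_expect (hfin x), phiT_eq_expect (hfin x')]⟩

theorem setLIntegral_abs_phiT_sub_rpow_le [MeasurableSpace X] [BorelSpace X]
    [SecondCountableTopology X] (μ : Measure X) (hfin : ∀ x, {y ∈ Y | dist x y ≤ T}.Finite)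
    (hne : ∀ x, ∃ y ∈ Y, dist x y ≤ T) (hY : Y.Countable) {M : ℝ≥0∞}
    (hM : ∀ y ∈ Y, μ (closedBall y T) ≤ M) {p s : ℝ} (hp : 0 ≤ p) (hTs : T ≤ s) (f : X → ℝ) :
    ∫⁻ q in {q : X × X | dist q.1 q.2 ≤ s},
        ENNReal.ofReal (|phiT Y T f q.1 - phiT Y T f q.2| ^ p) ∂(μ.prod μ)
      ≤ M * M * ∑' zz : {q : X × X // q.1 ∈ Y ∧ q.2 ∈ Y ∧ dist q.1 q.2 ≤ 6 * s},
          ENNReal.ofReal (|f zz.val.1 - f zz.val.2| ^ p) := by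
  have hpairs : {q : X × X | q.1 ∈ Y ∧ q.2 ∈ Y ∧ dist q.1 q.2 ≤ 6 * s} ⊆ Y ×ˢ Y :=
    fun _ hq => ⟨hq.1, hq.2.1⟩
  have : Countable {q : X × X // q.1 ∈ Y ∧ q.2 ∈ Y ∧ dist q.1 q.2 ≤ 6 * s} :=
    ((hY.prod hY).mono hpairs).to_subtype
  refine setLIntegral_le_mul_tsum_of_forall_exists
    (S := fun zz => closedBall zz.1.1 T ×ˢ closedBall zz.1.2 T)
    (measurableSet_le (by fun_prop) measurable_const)
    (fun _ => measurableSet_closedBall.prod measurableSet_closedBall)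
    (fun zz => (Measure.prod_prod_le _ _).trans (mul_le_mul' (hM _ zz.2.1) (hM _ zz.2.2.1))) _ ?_
  rintro ⟨x, x'⟩ hxx'
  obtain ⟨a, ha, b, hb, hxa, hxb, hle⟩ := exists_abs_phiT_sub_phiT_le hfin hne f x x'
  have hab : dist a b ≤ 6 * s := by
    linarith [dist_triangle4 a x x' b, dist_comm a x, dist_nonneg (x := x) (y := a),
      show dist x x' ≤ s from hxx']
  exact ⟨⟨(a, b), ha, hb, hab⟩, ⟨mem_closedBall.2 hxa, mem_closedBall.2 hxb⟩,
    ENNReal.ofReal_le_ofReal (Real.rpow_le_rpow (abs_nonneg _) hle hp)⟩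

end Extension

theorem continuous_energy_le_discrete_energy_general
    {X : Type*} [MetricSpace X] [MeasurableSpace X] [BorelSpace X]
    (μ : Measure X) (v V : ℝ → ℝ)
    (hv : ∀ r > 0, 0 < v r)
    (hV : ∀ r > 0, 0 < V r)
    (hgeom : ∀ (x : X) (r : ℝ), 0 < r →
      ENNReal.ofReal (v r) ≤ μ (Metric.closedBall x r) ∧
        μ (Metric.closedBall x r) ≤ ENNReal.ofReal (V r))
    (Y : Set X) (R : ℝ) (hR : 0 < R)
    (hsep : ∀ y ∈ Y, ∀ y' ∈ Y, y ≠ y' → 1 ≤ dist y y')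
    (hcov : ∀ x : X, ∃ y ∈ Y, dist x y ≤ R)
    (p : ℝ) (hp : 1 ≤ p) (T : ℝ) (hT : R ≤ T) (s : ℝ) (hs : T ≤ s) :
    ∃ C : ℝ, 0 < C ∧ ∀ f : X → ℝ,
      (∫⁻ q in {q : X × X | dist q.1 q.2 ≤ s},
          ENNReal.ofReal (|phiT Y T f q.1 - phiT Y T f q.2| ^ p) ∂(μ.prod μ))
        ≤ ENNReal.ofReal C *
          ∑' zz : {q : X × X // q.1 ∈ Y ∧ q.2 ∈ Y ∧ dist q.1 q.2 ≤ 6 * s},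
            ENNReal.ofReal (|f zz.val.1 - f zz.val.2| ^ p) := by
  have hT0 : 0 < T := hR.trans_le hT
  have hlow : ∀ δ > (0 : ℝ), ∃ c ≠ 0, ∀ x : X, c ≤ μ (closedBall x δ) := fun δ hδ =>
    ⟨_, (ENNReal.ofReal_pos.2 (hv δ hδ)).ne', fun x => (hgeom x δ hδ).1⟩
  have hup : ∀ x : X, ∀ r > (0 : ℝ), μ (closedBall x r) ≠ ∞ := fun x r hr =>
    ne_top_of_le_ne_top ENNReal.ofReal_ne_top (hgeom x r hr).2
  have := secondCountable_of_countable_of_pairwise_le_dist fun _ hε _ hN =>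
    countable_of_pairwise_le_dist hlow hup hε hN
  have hYsep : Y.Pairwise (1 ≤ dist · ·) := hsep
  have hfin : ∀ x, {y ∈ Y | dist x y ≤ T}.Finite := fun x =>
    finite_of_pairwise_le_dist_of_subset_closedBall hlow hup one_pos (hYsep.mono (sep_subset _ _))
      fun y hy => mem_closedBall'.2 hy.2
  have hne : ∀ x, ∃ y ∈ Y, dist x y ≤ T := fun x =>
    (hcov x).imp fun y hy => ⟨hy.1, hy.2.trans hT⟩
  refine ⟨V T * V T, mul_pos (hV T hT0) (hV T hT0), fun f => ?_⟩
  rw [ENNReal.ofReal_mul (hV T hT0).le]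
  exact setLIntegral_abs_phiT_sub_rpow_le μ hfin hne
    (countable_of_pairwise_le_dist hlow hup one_pos hYsep) (fun y _ => (hgeom y T hT0).2)
    (by linarith) hs f

/-- Continuous energy of the extension is controlled by the discrete energy: for a metric
measure space `(X,d,μ)` of bounded geometry, a discretization `Y ⊆ X` with covering
radius `R`, and `T ≥ R`, for every `s ≥ T` there is `C > 0` such that for every `f`,
`∫∫_{d(x,x') ≤ s} |φ_T f(x) − φ_T f(x')|^p dμ dμ
  ≤ C Σ_{(z,z') ∈ Y², d(z,z') ≤ 6s} |f(z) − f(z')|^p`. -/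
theorem continuous_energy_le_discrete_energy
    {X : Type*} [MetricSpace X] [MeasurableSpace X] [BorelSpace X]
    (μ : Measure X) (v V : ℝ → ℝ)
    (hv : ∀ r > 0, 0 < v r) (hvmono : MonotoneOn v (Set.Ioi 0))
    (hV : ∀ r > 0, 0 < V r) (hVmono : MonotoneOn V (Set.Ioi 0))
    (hgeom : ∀ (x : X) (r : ℝ), 0 < r →
      ENNReal.ofReal (v r) ≤ μ (Metric.closedBall x r) ∧
        μ (Metric.closedBall x r) ≤ ENNReal.ofReal (V r))
    (Y : Set X) (R : ℝ) (hR : 0 < R)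
    (hsep : ∀ y ∈ Y, ∀ y' ∈ Y, y ≠ y' → 1 ≤ dist y y')
    (hcov : ∀ x : X, ∃ y ∈ Y, dist x y ≤ R)
    (p : ℝ) (hp : 1 ≤ p) (T : ℝ) (hT : R ≤ T) (s : ℝ) (hs : T ≤ s) :
    ∃ C : ℝ, 0 < C ∧ ∀ f : X → ℝ,
      (∫⁻ q in {q : X × X | dist q.1 q.2 ≤ s},
          ENNReal.ofReal (|phiT Y T f q.1 - phiT Y T f q.2| ^ p) ∂(μ.prod μ))
        ≤ ENNReal.ofReal C *
          ∑' zz : {q : X × X // q.1 ∈ Y ∧ q.2 ∈ Y ∧ dist q.1 q.2 ≤ 6 * s},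
            ENNReal.ofReal (|f zz.val.1 - f zz.val.2| ^ p) :=
  continuous_energy_le_discrete_energy_general μ v V hv hV hgeom Y R hR hsep hcov p hp T hT s hs
end
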